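/- Let d ≥ 3 and let ω_N be a non-empty subset of the cube U_d = {-1/√d, 1/√d}^d ⊂ S^{d-1}. Then ω_N is a spherical 3-design if and only if N is even and, for every set I of one, two, or three pairwise distinct coordinate indices, exactly half of the vectors in ω_N have an even number of negative coordinates with indices in I and exactly half have an odd number of negative coordinates with indices in I. -/

import Mathlib

/-!
Coordinate reflections and coordinate permutations are linear isometries, and they preserve the
normalized surface measure. Hence a monomial with an odd exponent integrates to `0` over the
sphere, and `∫ yᵢ² = 1/d`. On a set of points with all `xᵢ² = 1/d`, a monomial `∏ xᵢ ^ αᵢ`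
equals `d ^ (-∑ ⌊αᵢ/2⌋)` times the multilinear monomial over the indices with odd `αᵢ`, so up
to degree `3` the even monomials (`1` and `xᵢ²`) are matched automatically, and the design
condition says exactly that `∑ₓ ∏_{i ∈ I} xᵢ = 0` for `1 ≤ |I| ≤ 3`. On the cube,
`∏_{i ∈ I} xᵢ = ± d ^ (-|I|/2)` with sign given by the parity of the negative coordinates in `I`,
so this vanishing says that the two parity classes have the same size.
-/

open MeasureTheory Metric
open scoped RealInnerProductSpace

noncomputable section

/-- `E n` is the Euclidean space `ℝ^n`; the unit sphere `S^{n-1}` is `Metric.sphere (0 : E n) 1`. -/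
abbrev E (n : ℕ) : Type := EuclideanSpace ℝ (Fin n)

/-- The surface area measure on the unit sphere of `ℝ^n`, normalized to be a probability
measure. -/
noncomputable def sphereUnif (n : ℕ) : Measure (sphere (0 : E n) 1) :=
  (((volume : Measure (E n)).toSphere) Set.univ)⁻¹ • (volume : Measure (E n)).toSphere

/-- `X` is a spherical `k`-design on the unit sphere of `ℝ^n`: all its points lie on the sphere
and every polynomial of total degree at most `k` has average over `X` equal to its average over
the sphere (with respect to the normalized surface area measure). -/
def IsSphericalDesign (n k : ℕ) (X : Finset (E n)) : Prop :=
  (↑X : Set (E n)) ⊆ sphere (0 : E n) 1 ∧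
    ∀ p : MvPolynomial (Fin n) ℝ, p.totalDegree ≤ k →
      (∑ x ∈ X, MvPolynomial.eval (fun i => x i) p) / (X.card : ℝ) =
        ∫ y, MvPolynomial.eval (fun i => (y : E n) i) p ∂(sphereUnif n)

open Finset
open scoped Pointwise

namespace LinearIsometryEquiv

variable {F : Type*} [NormedAddCommGroup F] [NormedSpace ℝ F]

def restrictSphere (f : F ≃ₗᵢ[ℝ] F) : sphere (0 : F) 1 ≃ₜ sphere (0 : F) 1 :=
  f.toHomeomorph.subtype fun x => by simp

@[simp]
lemma coe_restrictSphere_apply (f : F ≃ₗᵢ[ℝ] F) (y : sphere (0 : F) 1) :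
    (f.restrictSphere y : F) = f y := rfl

lemma Ioo_smul_image_coe_preimage_restrictSphere (f : F ≃ₗᵢ[ℝ] F) (s : Set (sphere (0 : F) 1)) :
    Set.Ioo (0 : ℝ) 1 • (Subtype.val '' (f.restrictSphere ⁻¹' s)) =
      f ⁻¹' (Set.Ioo (0 : ℝ) 1 • (Subtype.val '' s)) := by
  ext z
  simp only [Set.mem_smul, Set.mem_preimage, Set.mem_image]
  constructor
  · rintro ⟨r, hr, _, ⟨y, hy, rfl⟩, rfl⟩
    exact ⟨r, hr, _, ⟨_, hy, rfl⟩, by simp⟩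
  · rintro ⟨r, hr, _, ⟨y, hy, rfl⟩, hz⟩
    refine ⟨r, hr, _, ⟨f.restrictSphere.symm y, by simpa using hy, rfl⟩, ?_⟩
    rw [← f.symm_apply_apply z, ← hz, map_smul]
    rfl

end LinearIsometryEquiv

lemma MeasureTheory.Measure.measurePreserving_restrictSphere {F : Type*} [NormedAddCommGroup F]
    [NormedSpace ℝ F] [MeasurableSpace F] [BorelSpace F] {μ : Measure F} {f : F ≃ₗᵢ[ℝ] F}
    (hf : MeasurePreserving f μ μ) :
    MeasurePreserving f.restrictSphere μ.toSphere μ.toSphere := by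
  have hmeas := f.restrictSphere.continuous.measurable
  refine ⟨hmeas, Measure.ext fun s hs => ?_⟩
  rw [Measure.map_apply hmeas hs, toSphere_apply' _ hs, toSphere_apply' _ (hs.preimage hmeas),
    f.Ioo_smul_image_coe_preimage_restrictSphere,
    hf.measure_preimage_emb f.toHomeomorph.measurableEmbedding]

section sphereUnif

variable {n : ℕ}

lemma measurePreserving_restrictSphere_sphereUnif (f : E n ≃ₗᵢ[ℝ] E n) :
    MeasurePreserving f.restrictSphere (sphereUnif n) (sphereUnif n) :=
  (Measure.measurePreserving_restrictSphere f.measurePreserving).smul_measure _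

lemma integral_comp_restrictSphere (f : E n ≃ₗᵢ[ℝ] E n) (g : sphere (0 : E n) 1 → ℝ) :
    ∫ y, g (f.restrictSphere y) ∂sphereUnif n = ∫ y, g y ∂sphereUnif n :=
  (measurePreserving_restrictSphere_sphereUnif f).integral_comp
    f.restrictSphere.measurableEmbedding g

lemma isProbabilityMeasure_sphereUnif (hn : 0 < n) : IsProbabilityMeasure (sphereUnif n) := by
  have h : (volume : Measure (E n)).toSphere Set.univ ≠ 0 := by
    rw [Ne, Measure.measure_univ_eq_zero, Measure.toSphere_eq_zero_iff_finrank,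
      finrank_euclideanSpace_fin]
    exact hn.ne'
  constructor
  rw [sphereUnif, Measure.smul_apply, smul_eq_mul]
  exact ENNReal.inv_mul_cancel h (measure_ne_top _ _)

lemma integrable_sphereUnif_of_continuous (hn : 0 < n) {g : sphere (0 : E n) 1 → ℝ}
    (hg : Continuous g) : Integrable g (sphereUnif n) :=
  have := isProbabilityMeasure_sphereUnif hn
  hg.integrable_of_hasCompactSupport (.of_compactSpace g)

end sphereUnif

section moments

variable {n : ℕ}

def coordReflection {ι : Type*} [Fintype ι] [DecidableEq ι] (i : ι) :
    EuclideanSpace ℝ ι ≃ₗᵢ[ℝ] EuclideanSpace ℝ ι :=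
  .piLpCongrRight 2 fun j => if j = i then .neg ℝ else .refl ℝ ℝ

lemma coordReflection_apply {ι : Type*} [Fintype ι] [DecidableEq ι] (i j : ι)
    (x : EuclideanSpace ℝ ι) : coordReflection i x j = if j = i then -x j else x j := by
  by_cases h : j = i <;> simp [coordReflection, h]

lemma integral_eq_zero_of_comp_coordReflection (i : Fin n) {g : sphere (0 : E n) 1 → ℝ}
    (hg : ∀ y, g ((coordReflection i).restrictSphere y) = -g y) :
    ∫ y, g y ∂sphereUnif n = 0 := by
  have h := integral_comp_restrictSphere (coordReflection i) g
  simp only [hg, integral_neg] at h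
  linarith

lemma integral_prod_pow_eq_zero_of_odd (α : Fin n → ℕ) {i : Fin n} (hα : Odd (α i)) :
    ∫ y, ∏ j, (y : E n) j ^ α j ∂sphereUnif n = 0 := by
  refine integral_eq_zero_of_comp_coordReflection i fun y => ?_
  simp only [LinearIsometryEquiv.coe_restrictSphere_apply, coordReflection_apply]
  rw [Fintype.prod_eq_mul_prod_compl i, Fintype.prod_eq_mul_prod_compl i, if_pos rfl,
    hα.neg_pow, neg_mul]
  congr 2
  refine prod_congr rfl fun j hj => ?_
  rw [if_neg (mem_compl.mp hj ∘ mem_singleton.mpr)]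

lemma sum_sq_coord_eq_one (y : sphere (0 : E n) 1) : ∑ i, (y : E n) i ^ 2 = 1 := by
  rw [← EuclideanSpace.real_norm_sq_eq, norm_eq_of_mem_sphere, one_pow]

lemma integral_sq_coord_eq (i j : Fin n) :
    ∫ y, (y : E n) i ^ 2 ∂sphereUnif n = ∫ y, (y : E n) j ^ 2 ∂sphereUnif n := by
  rw [← integral_comp_restrictSphere (.piLpCongrLeft 2 ℝ ℝ (Equiv.swap i j))]
  simp

lemma integral_sq_coord (hn : 0 < n) (i : Fin n) :
    ∫ y, (y : E n) i ^ 2 ∂sphereUnif n = 1 / n := by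
  have := isProbabilityMeasure_sphereUnif hn
  have hsum : ∑ j : Fin n, ∫ y, (y : E n) j ^ 2 ∂sphereUnif n = 1 := by
    rw [← integral_finsetSum _ fun j _ =>
      integrable_sphereUnif_of_continuous hn (by fun_prop)]
    simp [sum_sq_coord_eq_one]
  simp only [integral_sq_coord_eq _ i, sum_const, card_univ, Fintype.card_fin,
    nsmul_eq_mul] at hsum
  rw [eq_div_iff (by positivity)]
  linarith

end moments

lemma isSphericalDesign_iff_forall_monomial {n k : ℕ} (hn : 0 < n) (X : Finset (E n)) :
    IsSphericalDesign n k X ↔ (↑X : Set (E n)) ⊆ sphere (0 : E n) 1 ∧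
      ∀ α : Fin n →₀ ℕ, ∑ i, α i ≤ k →
        (∑ x ∈ X, ∏ i, x i ^ α i) / (X.card : ℝ) =
          ∫ y, ∏ i, (y : E n) i ^ α i ∂sphereUnif n := by
  refine and_congr_right fun _ => ⟨fun h α hα => ?_, fun h p hp => ?_⟩
  · have := h (MvPolynomial.monomial α 1) (by
      rwa [MvPolynomial.totalDegree_monomial _ one_ne_zero, Finsupp.sum_fintype _ _ fun _ => rfl])
    simpa [MvPolynomial.eval_monomial, Finsupp.prod_fintype] using this
  · have hmono : ∀ α ∈ p.support, _ := fun α hα => h α (by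
      simpa [Finsupp.sum_fintype] using (MvPolynomial.le_totalDegree hα).trans hp)
    simp only [MvPolynomial.eval_eq']
    rw [integral_finsetSum _ fun α _ =>
      integrable_sphereUnif_of_continuous hn (by fun_prop), sum_comm, sum_div]
    refine sum_congr rfl fun α hα => ?_
    rw [← mul_sum, mul_div_assoc, hmono α hα, integral_const_mul]

section cube

variable {ι β : Type*}

lemma prod_eq_neg_one_pow_mul_pow (I : Finset ι) {v : ι → ℝ} {c : ℝ} (hc : 0 ≤ c)
    (hv : ∀ i ∈ I, v i = c ∨ v i = -c) :
    ∏ i ∈ I, v i = (-1) ^ #{i ∈ I | v i < 0} * c ^ #I := by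
  have hsign : ∀ i ∈ I, v i = if v i < 0 then -c else c := fun i hi => by
    rcases hv i hi with h | h <;> rw [h]
    · rw [if_neg hc.not_gt]
    · rcases hc.eq_or_lt with rfl | hc
      · simp
      · rw [if_pos (neg_neg_of_pos hc)]
  rw [prod_congr rfl hsign, prod_ite, prod_const, prod_const, neg_pow, mul_assoc, ← pow_add,
    card_filter_add_card_filter_not]

lemma sum_neg_one_pow_eq_zero_iff (X : Finset β) (f : β → ℕ) :
    ∑ x ∈ X, (-1 : ℝ) ^ f x = 0 ↔
      2 * #{x ∈ X | Even (f x)} = #X ∧ 2 * #{x ∈ X | ¬Even (f x)} = #X := by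
  have hcard := card_filter_add_card_filter_not (s := X) fun x => Even (f x)
  simp only [neg_one_pow_eq_ite, sum_ite, sum_const, nsmul_eq_mul, mul_one, mul_neg,
    add_neg_eq_zero, Nat.cast_inj]
  omega

lemma sum_prod_eq_zero_iff_of_mem_cube {X : Finset (EuclideanSpace ℝ ι)} (I : Finset ι) {c : ℝ}
    (hc : 0 < c) (hX : ∀ x ∈ X, ∀ i, x i = c ∨ x i = -c) :
    ∑ x ∈ X, ∏ i ∈ I, x i = 0 ↔
      2 * #{x ∈ X | Even #{i ∈ I | x i < 0}} = #X ∧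
        2 * #{x ∈ X | ¬Even #{i ∈ I | x i < 0}} = #X := by
  rw [sum_congr rfl fun x hx => prod_eq_neg_one_pow_mul_pow I hc.le fun i _ => hX x hx i,
    ← sum_mul, mul_eq_zero, or_iff_left (pow_ne_zero _ hc.ne'), sum_neg_one_pow_eq_zero_iff]

variable [Fintype ι]

lemma prod_pow_eq_pow_mul_prod_odd {v : ι → ℝ} {s : ℝ} (hv : ∀ i, v i ^ 2 = s) (α : ι → ℕ) :
    ∏ i, v i ^ α i = s ^ (∑ i, (α i / 2)) * ∏ i with Odd (α i), v i := by
  have hsplit : ∀ i, v i ^ α i = s ^ (α i / 2) * if Odd (α i) then v i else 1 := fun i => by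
    rw [← hv, ← pow_mul]
    rcases Nat.even_or_odd (α i) with h | h
    · rw [if_neg (Nat.not_odd_iff_even.mpr h), mul_one, Nat.two_mul_div_two_of_even h]
    · rw [if_pos h, ← pow_succ, Nat.two_mul_div_two_add_one_of_odd h]
  rw [prod_congr rfl fun i _ => hsplit i, prod_mul_distrib, prod_pow_eq_pow_sum, prod_filter]

lemma card_filter_odd_le_sum (α : ι → ℕ) : #{i | Odd (α i)} ≤ ∑ i, α i :=
  calc #{i | Odd (α i)} = ∑ i with Odd (α i), 1 := card_eq_sum_ones _
    _ ≤ ∑ i with Odd (α i), α i := sum_le_sum fun _ hi => (mem_filter.mp hi).2.pos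
    _ ≤ ∑ i, α i := sum_le_sum_of_subset (filter_subset _ _)

lemma eq_zero_or_eq_single_two_of_even [DecidableEq ι] {α : ι → ℕ}
    (heven : ∀ i, Even (α i)) (hα : ∑ i, α i ≤ 3) : α = 0 ∨ ∃ i, α = Pi.single i 2 := by
  rcases eq_or_ne α 0 with h0 | h0
  · exact .inl h0
  obtain ⟨i, hi⟩ : ∃ i, α i ≠ 0 := Function.ne_iff.mp h0
  refine .inr ⟨i, funext fun j => ?_⟩
  have hi3 : α i ≤ 3 := (single_le_sum (fun _ _ => Nat.zero_le _) (mem_univ i)).trans hα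
  obtain ⟨r, hr⟩ := heven i
  rcases eq_or_ne j i with rfl | hj
  · simp only [Pi.single_eq_same]
    omega
  · have hij : α i + α j ≤ 3 :=
      (sum_pair hj.symm).symm.trans_le ((sum_le_sum_of_subset (subset_univ _)).trans hα)
    obtain ⟨t, ht⟩ := heven j
    simp only [Pi.single_eq_of_ne hj]
    omega

end cube

section design

variable {n : ℕ}

lemma integral_prod_pow_of_forall_even (hn : 0 < n) {α : Fin n → ℕ} (heven : ∀ i, Even (α i))
    (hα : ∑ i, α i ≤ 3) :
    ∫ y, ∏ i, (y : E n) i ^ α i ∂sphereUnif n = (1 / n) ^ (∑ i, (α i / 2)) := by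
  have := isProbabilityMeasure_sphereUnif hn
  rcases eq_zero_or_eq_single_two_of_even heven hα with rfl | ⟨i, rfl⟩
  · simp
  · simp [Pi.single_apply, pow_ite, apply_ite (· / 2), integral_sq_coord hn i]

lemma sum_prod_eq_zero_of_isSphericalDesign {k : ℕ} {X : Finset (E n)}
    (h : IsSphericalDesign n k X) (hX : X.Nonempty) {I : Finset (Fin n)} (hI : I.Nonempty)
    (hIk : #I ≤ k) : ∑ x ∈ X, ∏ i ∈ I, x i = 0 := by
  obtain ⟨i, hi⟩ := hI
  have := ((isSphericalDesign_iff_forall_monomial i.pos X).mp h).2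
    (Finsupp.indicator I fun _ _ => 1) (by simpa [Finsupp.indicator_apply] using hIk)
  rw [integral_prod_pow_eq_zero_of_odd _ (i := i) (by simp [Finsupp.indicator_apply, hi]),
    div_eq_zero_iff, or_iff_left (Nat.cast_ne_zero.mpr hX.card_pos.ne')] at this
  simpa [Finsupp.indicator_apply, pow_ite, prod_ite_mem] using this

lemma mem_sphere_of_sq_eq (hn : 0 < n) {x : E n} (hx : ∀ i, x i ^ 2 = 1 / n) :
    x ∈ sphere (0 : E n) 1 := by
  rw [mem_sphere_zero_iff_norm, ← sq_eq_sq₀ (norm_nonneg _) zero_le_one, one_pow,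
    EuclideanSpace.real_norm_sq_eq]
  simp [hx, hn.ne']

theorem isSphericalDesign_three_iff_of_sq_eq (hn : 0 < n) {X : Finset (E n)} (hX : X.Nonempty)
    (hsq : ∀ x ∈ X, ∀ i, x i ^ 2 = 1 / n) :
    IsSphericalDesign n 3 X ↔
      ∀ I : Finset (Fin n), I.Nonempty → #I ≤ 3 → ∑ x ∈ X, ∏ i ∈ I, x i = 0 := by
  refine ⟨fun h I hI hI3 => sum_prod_eq_zero_of_isSphericalDesign h hX hI hI3, fun h => ?_⟩
  refine (isSphericalDesign_iff_forall_monomial hn X).mpr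
    ⟨fun x hx => mem_sphere_of_sq_eq hn (hsq x hx), fun α hα => ?_⟩
  rw [sum_congr rfl fun x hx => prod_pow_eq_pow_mul_prod_odd (hsq x hx) α, ← mul_sum]
  rcases (univ.filter fun i => Odd (α i)).eq_empty_or_nonempty with hJ | ⟨i, hi⟩
  · have heven : ∀ i, Even (α i) := by simpa using hJ
    rw [hJ, integral_prod_pow_of_forall_even hn heven hα]
    simp [hX.card_pos.ne']
  · rw [h _ ⟨i, hi⟩ ((card_filter_odd_le_sum α).trans hα),
      integral_prod_pow_eq_zero_of_odd α (mem_filter.mp hi).2, mul_zero, zero_div]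

end design

theorem cube_subset_three_design_iff (d : ℕ) (hd : 3 ≤ d) (X : Finset (E d)) (hne : X.Nonempty)
    (hcube : ∀ x ∈ X, ∀ i : Fin d, x i = 1 / Real.sqrt d ∨ x i = -(1 / Real.sqrt d)) :
    IsSphericalDesign d 3 X ↔
      (Even X.card ∧
        ∀ I : Finset (Fin d), (I.card = 1 ∨ I.card = 2 ∨ I.card = 3) →
          2 * (X.filter fun x => Even (I.filter fun i => x i < 0).card).card = X.card ∧
          2 * (X.filter fun x => ¬ Even (I.filter fun i => x i < 0).card).card = X.card) := by
  have hn : 0 < d := by omega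
  have hc : 0 < 1 / Real.sqrt d := by positivity
  have hsq : ∀ x ∈ X, ∀ i, x i ^ 2 = 1 / d := fun x hx i => by
    rcases hcube x hx i with h | h <;> simp [h, Real.sq_sqrt (Nat.cast_nonneg d)]
  rw [isSphericalDesign_three_iff_of_sq_eq hn hne hsq]
  simp only [sum_prod_eq_zero_iff_of_mem_cube _ hc hcube]
  constructor
  · intro h
    obtain ⟨hE, -⟩ := h {⟨0, hn⟩} (singleton_nonempty _) (by simp)
    exact ⟨even_iff_two_dvd.mpr ⟨_, hE.symm⟩, fun I hI => h I (card_pos.mp (by omega)) (by omega)⟩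
  · rintro ⟨-, h⟩ I hI hI3
    exact h I (by have := hI.card_pos; omega)
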